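/- arXiv:1308.2462 — 5 statements merged into one kernel-verified Lean document; each statement's English description precedes it below -/
import Mathlib

section
/- Let h₁ ≥ h₂ ≥ … ≥ h_N > 0, σ > 0, ζ ∈ (0,1), P > 0, Ē > 0 with Ē/(ζ·h₁) ≤ P. Define R_TS = max over nonnegative (p_n) with Σ p_n ≤ P − Ē/(ζ·h₁) of (1/N)·Σₙ log₂(1 + hₙ·pₙ/σ²), and define R_PS = max over nonnegative (p_n) with Σ pₙ ≤ P and over ρ ∈ [Ē/(ζ·h₁·P), 1] of (1/N)·Σₙ log₂(1 + (1−ρ)·hₙ·pₙ/σ²). Then R_PS ≤ R_TS. -/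
/-- Single-user OFDM SWIPT, no peak power constraint: the maximum PS rate is no
larger than the maximum TS rate (Proposition 2). -/
theorem stmt_4 (N : ℕ) (hN : 0 < N) (h : Fin N → ℝ)
    (hsort : ∀ i j : Fin N, i ≤ j → h j ≤ h i) (hpos : ∀ n, 0 < h n)
    (σ ζ P E : ℝ) (hσ : 0 < σ) (hζ0 : 0 < ζ) (hζ1 : ζ < 1) (hP : 0 < P)
    (hE : 0 < E) (hfeas : E / (ζ * h ⟨0, hN⟩) ≤ P) :
    sSup {r : ℝ | ∃ (p : Fin N → ℝ) (ρ : ℝ),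
        (∀ n, 0 ≤ p n) ∧ (∑ n, p n) ≤ P ∧
        E / (ζ * h ⟨0, hN⟩ * P) ≤ ρ ∧ ρ ≤ 1 ∧
        r = (1 / (N : ℝ)) * ∑ n, Real.logb 2 (1 + (1 - ρ) * h n * p n / σ ^ 2)} ≤
    sSup {r : ℝ | ∃ p : Fin N → ℝ,
        (∀ n, 0 ≤ p n) ∧ (∑ n, p n) ≤ P - E / (ζ * h ⟨0, hN⟩) ∧
        r = (1 / (N : ℝ)) * ∑ n, Real.logb 2 (1 + h n * p n / σ ^ 2)} := by
  have h0 : 0 < h ⟨0, hN⟩ := hpos _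
  have hzh : 0 < ζ * h ⟨0, hN⟩ := mul_pos hζ0 h0
  have hEq : 0 < E / (ζ * h ⟨0, hN⟩) := div_pos hE hzh
  apply csSup_le_csSup
  · -- BddAbove of TS set
    refine ⟨(1 / (N : ℝ)) * ∑ n, Real.logb 2 (1 + h n * P / σ ^ 2), ?_⟩
    rintro r ⟨p, hp0, hpsum, rfl⟩
    have hNpos : (0:ℝ) ≤ 1 / N := by positivity
    refine mul_le_mul_of_nonneg_left (Finset.sum_le_sum fun n _ => ?_) hNpos
    have hpn : p n ≤ P := by
      have h1 : p n ≤ ∑ m, p m :=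
        Finset.single_le_sum (fun m _ => hp0 m) (Finset.mem_univ n)
      linarith
    have hx : (0:ℝ) < 1 + h n * p n / σ ^ 2 := by
      have := hp0 n; have := (hpos n).le; positivity
    have hle : 1 + h n * p n / σ ^ 2 ≤ 1 + h n * P / σ ^ 2 := by
      have := (hpos n).le
      gcongr
    exact Real.logb_le_logb_of_le one_lt_two hx hle
  · -- PS set nonempty
    refine ⟨0, fun _ => 0, E / (ζ * h ⟨0, hN⟩ * P), fun _ => le_refl 0, ?_, le_refl _, ?_, ?_⟩
    · simp [hP.le]
    · rw [div_le_one (by positivity)]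
      have := (div_le_iff₀ hzh).mp hfeas
      nlinarith
    · simp
  · rintro r ⟨p, ρ, hp0, hpsum, hρ0, hρ1, rfl⟩
    refine ⟨fun n => (1 - ρ) * p n, fun n => mul_nonneg (by linarith) (hp0 n), ?_, ?_⟩
    · have hρP : E / (ζ * h ⟨0, hN⟩) ≤ ρ * P := by
        have := mul_le_mul_of_nonneg_right hρ0 hP.le
        calc E / (ζ * h ⟨0, hN⟩) = E / (ζ * h ⟨0, hN⟩ * P) * P := by
              field_simp
          _ ≤ ρ * P := this
      calc ∑ n, (1 - ρ) * p n = (1 - ρ) * ∑ n, p n := by rw [Finset.mul_sum]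
        _ ≤ (1 - ρ) * P := by
            apply mul_le_mul_of_nonneg_left hpsum (by linarith)
        _ = P - ρ * P := by ring
        _ ≤ P - E / (ζ * h ⟨0, hN⟩) := by linarith
    · congr 1
      apply Finset.sum_congr rfl
      intro n _
      ring_nf
end

section
/- Let h > 0, σ > 0, ζ ∈ (0,1), P > 0, Ē > 0 with Ē ≤ ζ·h·P. For any α₁, α₂ ∈ [0,1] with α₁ + α₂ ≤ 1 and any p₁, p₂ ≥ 0 satisfying the energy-harvesting constraint ζ·α₂·h·p₂ ≥ Ē and the power constraint α₁·p₁ + α₂·p₂ ≤ P, the TS rate α₁·log₂(1 + h·p₁/σ²) is at most the PS rate log₂(1 + (h·P − Ē/ζ)/σ²). -/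
/-- Single-carrier SWIPT (Proposition 4): any feasible TS rate is at most the PS
rate log₂(1 + (h·P − Ē/ζ)/σ²). -/
theorem stmt_8 (h σ ζ P E : ℝ) (hh : 0 < h) (hσ : 0 < σ)
    (hζ0 : 0 < ζ) (hζ1 : ζ < 1) (hP : 0 < P) (hE : 0 < E)
    (hfeas : E ≤ ζ * h * P)
    (α₁ α₂ p₁ p₂ : ℝ) (hα₁0 : 0 ≤ α₁) (hα₁1 : α₁ ≤ 1)
    (hα₂0 : 0 ≤ α₂) (hα₂1 : α₂ ≤ 1) (hsum : α₁ + α₂ ≤ 1)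
    (hp₁ : 0 ≤ p₁) (hp₂ : 0 ≤ p₂)
    (hEH : ζ * α₂ * h * p₂ ≥ E) (hpow : α₁ * p₁ + α₂ * p₂ ≤ P) :
    α₁ * Real.logb 2 (1 + h * p₁ / σ ^ 2) ≤
      Real.logb 2 (1 + (h * P - E / ζ) / σ ^ 2) := by
  have hσ2 : (0:ℝ) < σ ^ 2 := by positivity
  set x : ℝ := h * p₁ / σ ^ 2 with hxdef
  have hx0 : 0 ≤ x := by positivity
  -- Bernoulli: (1+x)^α₁ ≤ 1 + α₁ * x
  have hbern : (1 + x) ^ α₁ ≤ 1 + α₁ * x :=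
    rpow_one_add_le_one_add_mul_self (by linarith) hα₁0 hα₁1
  have h1x : (0:ℝ) < 1 + x := by linarith
  -- step 1: α₁ * logb 2 (1+x) ≤ logb 2 (1 + α₁ * x)
  have hlog2 : (0:ℝ) < Real.log 2 := Real.log_pos (by norm_num)
  have step1 : α₁ * Real.logb 2 (1 + x) ≤ Real.logb 2 (1 + α₁ * x) := by
    have hlog : α₁ * Real.log (1 + x) ≤ Real.log (1 + α₁ * x) := by
      have := Real.log_le_log (by positivity) hbern
      rwa [Real.log_rpow h1x] at this
    unfold Real.logb
    rw [← mul_div_assoc]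
    exact div_le_div_of_nonneg_right hlog hlog2.le |>.trans_eq rfl
  -- step 2: argument comparison
  have harg : 1 + α₁ * x ≤ 1 + (h * P - E / ζ) / σ ^ 2 := by
    have hEdiv : E / ζ ≤ α₂ * h * p₂ := by
      rw [div_le_iff₀ hζ0]
      nlinarith
    have hnum : α₁ * (h * p₁) ≤ h * P - E / ζ := by nlinarith
    have : α₁ * x = α₁ * (h * p₁) / σ ^ 2 := by rw [hxdef]; ring
    rw [this]
    have := div_le_div_of_nonneg_right hnum hσ2.le
    linarith
  have step2 : Real.logb 2 (1 + α₁ * x) ≤ Real.logb 2 (1 + (h * P - E / ζ) / σ ^ 2) :=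
    Real.logb_le_logb_of_le (by norm_num) (by nlinarith) harg
  exact step1.trans step2
end

section
/- Let h : Fin K → Fin N → ℝ₊, ζ ∈ (0,1), P > 0, P_peak ≥ P/N, and Ē : Fin K → ℝ₊. The feasibility of the TS problem (existence of time ratios and powers satisfying all EH, total power, peak power, and time constraints) is equivalent to the existence of p : Fin N → ℝ with 0 ≤ pₙ ≤ P_peak, Σₙ pₙ ≤ P, and ζ·Σₙ h_{k,n}·pₙ ≥ Ēₖ for all k. -/
/-! Time sharing can only help through the average powers: if the slots `i` with time ratios
`α i` use powers `p i`, then the time-averaged power `∑ i, α i * p i n` again respects the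
peak and total power constraints, and each user harvests at least as much from it as from the
slots it listens to, since harvested energy is linear in the power and channel gains are
nonnegative. Conversely, a solution of the linear program is realised by spending the whole
frame in the power slot. -/

open Finset

section TimeSharing

variable {ι ν : Type*} [Fintype ι] (α : ι → ℝ) (p : ι → ν → ℝ)

def timeAverage (n : ν) : ℝ := ∑ i, α i * p i n

variable {α p}

lemma timeAverage_nonneg (hα : ∀ i, 0 ≤ α i) (hp : ∀ i n, 0 ≤ p i n) (n : ν) :
    0 ≤ timeAverage α p n :=
  sum_nonneg fun i _ => mul_nonneg (hα i) (hp i n)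

lemma timeAverage_le {c : ℝ} (hc : 0 ≤ c) (hα : ∀ i, 0 ≤ α i) (hα₁ : ∑ i, α i ≤ 1)
    (hp : ∀ i n, p i n ≤ c) (n : ν) : timeAverage α p n ≤ c :=
  calc ∑ i, α i * p i n ≤ ∑ i, α i * c := sum_le_sum fun i _ => by gcongr; exacts [hα i, hp i n]
    _ = (∑ i, α i) * c := (sum_mul _ _ _).symm
    _ ≤ c := mul_le_of_le_one_left hc hα₁

variable (α p)

lemma sum_mul_timeAverage [Fintype ν] (w : ν → ℝ) :
    ∑ n, w n * timeAverage α p n = ∑ i, α i * ∑ n, w n * p i n := by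
  simp only [timeAverage, mul_sum]
  rw [sum_comm]
  exact sum_congr rfl fun i _ => sum_congr rfl fun n _ => mul_left_comm _ _ _

lemma sum_timeAverage [Fintype ν] : ∑ n, timeAverage α p n = ∑ i, α i * ∑ n, p i n := by
  simpa only [one_mul] using sum_mul_timeAverage α p fun _ => 1

end TimeSharing

lemma sum_single_one_mul {ι : Type*} [DecidableEq ι] {s : Finset ι} {j : ι} (hj : j ∈ s)
    (f : ι → ℝ) : ∑ i ∈ s, (Pi.single j 1 : ι → ℝ) i * f i = f j := by
  simp [Pi.single_apply, ite_mul, hj]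

theorem stmt_15_general (K N : ℕ) (h : Fin K → Fin N → ℝ)
    (hh : ∀ k n, 0 ≤ h k n) (ζ P Ppeak : ℝ) (hζ0 : 0 < ζ)
    (E : Fin K → ℝ) :
    (∃ (α : Fin (K + 1) → ℝ) (p : Fin (K + 1) → Fin N → ℝ),
      (∀ k, 0 ≤ α k ∧ α k ≤ 1) ∧ (∑ k, α k) ≤ 1 ∧
      (∀ k n, 0 ≤ p k n ∧ p k n ≤ Ppeak) ∧
      (∑ k, α k * ∑ n, p k n) ≤ P ∧
      (∀ k : Fin K, ζ * ∑ i ∈ Finset.univ.erase k.castSucc,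
          α i * ∑ n, h k n * p i n ≥ E k)) ↔
    (∃ p : Fin N → ℝ, (∀ n, 0 ≤ p n ∧ p n ≤ Ppeak) ∧ (∑ n, p n) ≤ P ∧
      (∀ k, ζ * ∑ n, h k n * p n ≥ E k)) := by
  constructor
  · rintro ⟨α, p, hα, hα₁, hp, hpow, hEH⟩
    have hα₀ i := (hα i).1
    refine ⟨timeAverage α p, fun n => ⟨timeAverage_nonneg hα₀ (fun i n => (hp i n).1) n,
      timeAverage_le ((hp 0 n).1.trans (hp 0 n).2) hα₀ hα₁ (fun i n => (hp i n).2) n⟩,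
      (sum_timeAverage α p).trans_le hpow, fun k => ?_⟩
    rw [sum_mul_timeAverage]
    refine (hEH k).trans (mul_le_mul_of_nonneg_left ?_ hζ0.le)
    exact sum_le_univ_sum_of_nonneg fun i =>
      mul_nonneg (hα₀ i) (sum_nonneg fun n _ => mul_nonneg (hh k n) (hp i n).1)
  · rintro ⟨p, hp, hpow, hEH⟩
    have hlast (k : Fin K) : Fin.last K ∈ univ.erase k.castSucc :=
      mem_erase.2 ⟨(Fin.castSucc_lt_last k).ne', mem_univ _⟩
    refine ⟨Pi.single (Fin.last K) 1, fun _ => p, fun i => ?_, ?_, fun _ => hp, ?_, fun k => ?_⟩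
    · rcases eq_or_ne i (Fin.last K) with rfl | hi <;> simp [*]
    · simp
    · rwa [sum_single_one_mul (mem_univ _)]
    · rw [sum_single_one_mul (hlast k)]
      exact hEH k

/-- Feasibility of the multiuser TS problem is equivalent to feasibility of the
linear program in the power-slot powers (Problem (4)). -/
theorem stmt_15 (K N : ℕ) (hN : 0 < N) (h : Fin K → Fin N → ℝ)
    (hh : ∀ k n, 0 ≤ h k n) (ζ P Ppeak : ℝ) (hζ0 : 0 < ζ) (hζ1 : ζ < 1)
    (hP : 0 < P) (hPpeak : P / (N : ℝ) ≤ Ppeak)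
    (E : Fin K → ℝ) (hE : ∀ k, 0 ≤ E k) :
    (∃ (α : Fin (K + 1) → ℝ) (p : Fin (K + 1) → Fin N → ℝ),
      (∀ k, 0 ≤ α k ∧ α k ≤ 1) ∧ (∑ k, α k) ≤ 1 ∧
      (∀ k n, 0 ≤ p k n ∧ p k n ≤ Ppeak) ∧
      (∑ k, α k * ∑ n, p k n) ≤ P ∧
      (∀ k : Fin K, ζ * ∑ i ∈ Finset.univ.erase k.castSucc,
          α i * ∑ n, h k n * p i n ≥ E k)) ↔
    (∃ p : Fin N → ℝ, (∀ n, 0 ≤ p n ∧ p n ≤ Ppeak) ∧ (∑ n, p n) ≤ P ∧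
      (∀ k, ζ * ∑ n, h k n * p n ≥ E k)) :=
  stmt_15_general K N h hh ζ P Ppeak hζ0 E
end

section
/- In the power-splitting problem, for fixed powers p : Fin N → ℝ≥0 with ζ·Σₙ h_{k,n}·pₙ > 0 for all k, the rate objective Σₙ w_{Π(n)}·log₂(1 + (1−ρ_{Π(n)})·h_{Π(n),n}·pₙ/σ²) is nonincreasing in each ρₖ ∈ [0,1]; hence the optimal splitting ratio satisfying the constraint ρₖ·ζ·Σₙ h_{k,n}·pₙ ≥ Ēₖ is ρₖ = Ēₖ/(ζ·Σₙ h_{k,n}·pₙ) whenever this is ≤ 1. -/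
/-- In the PS problem with fixed powers, the rate is nonincreasing in each ρₖ, so
the optimal splitting ratios make the EH constraints tight:
ρₖ = Ēₖ/(ζ·Σₙ h_{k,n}·pₙ). -/
theorem stmt_16 (K N : ℕ) (h : Fin K → Fin N → ℝ) (hh : ∀ k n, 0 ≤ h k n)
    (p : Fin N → ℝ) (hp : ∀ n, 0 ≤ p n) (w : Fin K → ℝ) (hw : ∀ k, 0 ≤ w k)
    (σ ζ : ℝ) (hσ : 0 < σ) (hζ : 0 < ζ) (pia : Fin N → Fin K)
    (E : Fin K → ℝ) (hE : ∀ k, 0 ≤ E k)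
    (hpos : ∀ k, 0 < ζ * ∑ n, h k n * p n)
    (hle : ∀ k, E k / (ζ * ∑ n, h k n * p n) ≤ 1) :
    (∀ ρ ρ' : Fin K → ℝ, (∀ k, 0 ≤ ρ k ∧ ρ k ≤ 1) → (∀ k, 0 ≤ ρ' k ∧ ρ' k ≤ 1) →
      (∀ k, ρ k ≤ ρ' k) →
      (∑ n, w (pia n) * Real.logb 2 (1 + (1 - ρ' (pia n)) * h (pia n) n * p n / σ ^ 2)) ≤
        ∑ n, w (pia n) * Real.logb 2 (1 + (1 - ρ (pia n)) * h (pia n) n * p n / σ ^ 2)) ∧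
    (∀ ρ : Fin K → ℝ, (∀ k, 0 ≤ ρ k ∧ ρ k ≤ 1) →
      (∀ k, ρ k * (ζ * ∑ n, h k n * p n) ≥ E k) →
      (∑ n, w (pia n) * Real.logb 2 (1 + (1 - ρ (pia n)) * h (pia n) n * p n / σ ^ 2)) ≤
        ∑ n, w (pia n) * Real.logb 2
          (1 + (1 - E (pia n) / (ζ * ∑ m, h (pia n) m * p m)) * h (pia n) n * p n / σ ^ 2)) := by
  have key : ∀ ρ ρ' : Fin K → ℝ, (∀ k, 0 ≤ ρ k ∧ ρ k ≤ 1) → (∀ k, 0 ≤ ρ' k ∧ ρ' k ≤ 1) →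
      (∀ k, ρ k ≤ ρ' k) →
      (∑ n, w (pia n) * Real.logb 2 (1 + (1 - ρ' (pia n)) * h (pia n) n * p n / σ ^ 2)) ≤
        ∑ n, w (pia n) * Real.logb 2 (1 + (1 - ρ (pia n)) * h (pia n) n * p n / σ ^ 2) := by
    intro ρ ρ' hρ hρ' hmono
    apply Finset.sum_le_sum
    intro n _
    apply mul_le_mul_of_nonneg_left _ (hw _)
    have h1 : (0:ℝ) ≤ (1 - ρ' (pia n)) * h (pia n) n * p n / σ ^ 2 := by
      apply div_nonneg _ (by positivity)
      exact mul_nonneg (mul_nonneg (by linarith [(hρ' (pia n)).2]) (hh _ _)) (hp _)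
    have h2 : (1 - ρ' (pia n)) * h (pia n) n * p n / σ ^ 2 ≤
        (1 - ρ (pia n)) * h (pia n) n * p n / σ ^ 2 := by
      apply div_le_div_of_nonneg_right _ (by positivity)
      have := mul_nonneg (hh (pia n) n) (hp n)
      nlinarith [hmono (pia n)]
    have hx : (0:ℝ) < 1 + (1 - ρ' (pia n)) * h (pia n) n * p n / σ ^ 2 := by linarith
    exact Real.logb_le_logb_of_le one_lt_two hx (by linarith)
  refine ⟨key, ?_⟩
  intro ρ hρ hconstr
  set ρ0 : Fin K → ℝ := fun k => E k / (ζ * ∑ n, h k n * p n) with hρ0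
  have hρ0b : ∀ k, 0 ≤ ρ0 k ∧ ρ0 k ≤ 1 := fun k =>
    ⟨div_nonneg (hE k) (hpos k).le, hle k⟩
  have hmono : ∀ k, ρ0 k ≤ ρ k := fun k =>
    (div_le_iff₀ (hpos k)).mpr (by linarith [hconstr k])
  exact key ρ0 ρ hρ0b hρ hmono
end

section
/- Let h > 0, σ > 0, Ē > 0, ζ ∈ (0,1), P > Ē/(ζ·h). For the single-carrier TS problem, for every ε > 0 there exist feasible (α₁, α₂, p₁, p₂) with ζ·α₂·h·p₂ ≥ Ē and α₁·p₁ + α₂·p₂ ≤ P (no peak constraint) such that α₁·log₂(1 + h·p₁/σ²) > log₂(1 + (h·P − Ē/ζ)/σ²) − ε. -/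
/-!
Time sharing with a vanishing energy-harvesting slot. Give the fraction δ of the time to energy
harvesting at the diverging power E / (ζ h δ), which collects exactly the energy E, and the
fraction 1 - δ to information transfer at the power (P - E / (ζ h)) / (1 - δ), which exhausts the
power budget. Concentrating the power in a shorter slot only raises the SNR, so the rate is at
least (1 - δ) log₂(1 + (h P - E / ζ) / σ²), which tends to the power-splitting rate as δ → 0.
-/

open Filter Topology Real

lemma logb_one_add_snr_le {h σ p q : ℝ} (hh : 0 ≤ h) (hp : 0 ≤ p) (hpq : p ≤ q) :
    logb 2 (1 + h * p / σ ^ 2) ≤ logb 2 (1 + h * q / σ ^ 2) := by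
  have hsnr : 0 ≤ h * p / σ ^ 2 := by positivity
  gcongr
  linarith

lemma le_div_one_sub {D δ : ℝ} (hD : 0 ≤ D) (hδ0 : 0 ≤ δ) (hδ1 : δ < 1) : D ≤ D / (1 - δ) :=
  (le_div_iff₀ (sub_pos.mpr hδ1)).mpr (by nlinarith)

lemma exists_pos_lt_one_lt_one_sub_mul (L : ℝ) {ε : ℝ} (hε : 0 < ε) :
    ∃ δ : ℝ, 0 < δ ∧ δ < 1 ∧ L - ε < (1 - δ) * L := by
  have hlim : Tendsto (fun δ : ℝ => (1 - δ) * L) (𝓝[>] 0) (𝓝 L) := by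
    have : Continuous (fun δ : ℝ => (1 - δ) * L) := by fun_prop
    simpa using (this.tendsto 0).mono_left nhdsWithin_le_nhds
  have hlt1 : ∀ᶠ δ in 𝓝[>] (0 : ℝ), δ < 1 :=
    nhdsWithin_le_nhds (gt_mem_nhds zero_lt_one)
  have hpos : ∀ᶠ δ in 𝓝[>] (0 : ℝ), 0 < δ := self_mem_nhdsWithin
  exact (hpos.and (hlt1.and (hlim.eventually (lt_mem_nhds (sub_lt_self L hε))))).exists

theorem stmt_18_general (h σ E ζ P : ℝ) (hh : 0 < h) (hE : 0 < E)
    (hζ0 : 0 < ζ) (hP : E / (ζ * h) < P) :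
    ∀ ε : ℝ, 0 < ε →
      ∃ α₁ α₂ p₁ p₂ : ℝ, 0 ≤ α₁ ∧ 0 ≤ α₂ ∧ α₁ + α₂ ≤ 1 ∧ 0 ≤ p₁ ∧ 0 ≤ p₂ ∧
        ζ * α₂ * h * p₂ ≥ E ∧ α₁ * p₁ + α₂ * p₂ ≤ P ∧
        α₁ * Real.logb 2 (1 + h * p₁ / σ ^ 2) >
          Real.logb 2 (1 + (h * P - E / ζ) / σ ^ 2) - ε := by
  intro ε hε
  set D := P - E / (ζ * h) with hD_def
  have hD : 0 < D := sub_pos.mpr hP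
  have hhD : h * P - E / ζ = h * D := by
    rw [hD_def]; field_simp
  obtain ⟨δ, hδ0, hδ1, hrate⟩ := exists_pos_lt_one_lt_one_sub_mul (logb 2 (1 + h * D / σ ^ 2)) hε
  have hα₁ : 0 < 1 - δ := sub_pos.mpr hδ1
  refine ⟨1 - δ, δ, D / (1 - δ), E / (ζ * h * δ), hα₁.le, hδ0.le, by linarith,
    by positivity, by positivity, ?energy, ?power, ?rate⟩
  case energy => exact (by field_simp : ζ * δ * h * (E / (ζ * h * δ)) = E).ge
  case power =>
    have hharvest : δ * (E / (ζ * h * δ)) = E / (ζ * h) := by field_simp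
    rw [mul_div_cancel₀ _ hα₁.ne', hharvest, hD_def, sub_add_cancel]
  case rate =>
    rw [hhD]
    calc _ < (1 - δ) * logb 2 (1 + h * D / σ ^ 2) := hrate
      _ ≤ _ := mul_le_mul_of_nonneg_left
          (logb_one_add_snr_le hh.le hD.le (le_div_one_sub hD.le hδ0.le hδ1)) hα₁.le

/-- Achievability for Proposition 4 with no peak power constraint: the TS rate
can be made arbitrarily close to the PS rate log₂(1 + (h·P − Ē/ζ)/σ²). -/
theorem stmt_18 (h σ E ζ P : ℝ) (hh : 0 < h) (hσ : 0 < σ) (hE : 0 < E)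
    (hζ0 : 0 < ζ) (hζ1 : ζ < 1) (hP : E / (ζ * h) < P) :
    ∀ ε : ℝ, 0 < ε →
      ∃ α₁ α₂ p₁ p₂ : ℝ, 0 ≤ α₁ ∧ 0 ≤ α₂ ∧ α₁ + α₂ ≤ 1 ∧ 0 ≤ p₁ ∧ 0 ≤ p₂ ∧
        ζ * α₂ * h * p₂ ≥ E ∧ α₁ * p₁ + α₂ * p₂ ≤ P ∧
        α₁ * Real.logb 2 (1 + h * p₁ / σ ^ 2) >
          Real.logb 2 (1 + (h * P - E / ζ) / σ ^ 2) - ε :=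
  stmt_18_general h σ E ζ P hh hE hζ0 hP
end
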